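/- For every function u : V* → ℝ and every n ≥ 0, sup_{x∈V*} |u(x) − ū_n(x)| ≤ 2 · sup{ |u(x) − u(y)| : x, y ∈ V*, |x − y| ≤ 2^{−n} }, where |x − y| is the Euclidean distance in ℝ². -/

import Mathlib

open scoped Classical
open Real Set

noncomputable section

abbrev Pt : Type := ℝ × ℝ

/-- The three corners of the unit triangle. -/
def sierA : Fin 3 → Pt
  | 0 => (0, 0)
  | 1 => (1 / 2, Real.sqrt 3 / 2)
  | 2 => (1, 0)

/-- The three contractions `φᵢ(x) = (x + aᵢ)/2`. -/
def ctr (i : Fin 3) (x : Pt) : Pt :=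
  ((x.1 + (sierA i).1) / 2, (x.2 + (sierA i).2) / 2)

/-- The vertex sets `V n`. -/
def V : ℕ → Finset Pt
  | 0 => {sierA 0, sierA 1, sierA 2}
  | n + 1 => (V n).image (ctr 0) ∪ (V n).image (ctr 1) ∪ (V n).image (ctr 2)

/-- The (ordered) edge sets: `(x, y) ∈ Ed n` iff `{x,y} ∈ E_n`; each undirected
edge appears with both orientations. -/
def Ed : ℕ → Finset (Pt × Pt)
  | 0 => (V 0 ×ˢ V 0).filter fun p => p.1 ≠ p.2
  | n + 1 => Finset.univ.biUnion fun i : Fin 3 => (Ed n).image fun p => (ctr i p.1, ctr i p.2)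

/-- `V* = ⋃ n, V n`. -/
def Vstar : Set Pt := ⋃ n, (V n : Set Pt)

/-- The level-`n` energy `E_n(u,u) = (5/3)^n Σ_{{x,y} ∈ E_n} (u y - u x)²`
(each undirected edge counted once, whence the division by 2). -/
def En (n : ℕ) (u : Pt → ℝ) : ℝ :=
  (5 / 3 : ℝ) ^ n * (∑ p ∈ Ed n, (u p.2 - u p.1) ^ 2) / 2

/-- The discrete Laplacian `Δ_n u (x) = 5^n Σ_{y ∼ₙ x} (u y - u x)`. -/
def lap (n : ℕ) (u : Pt → ℝ) (x : Pt) : ℝ :=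
  (5 : ℝ) ^ n * ∑ p ∈ (Ed n).filter (fun p => p.1 = x), (u p.2 - u p.1)

/-- Euclidean distance in ℝ². -/
def eucl (x y : Pt) : ℝ := Real.sqrt ((y.1 - x.1) ^ 2 + (y.2 - x.2) ^ 2)

/-- `ub` is the harmonic extension `ū_n` of `u` from level `n`. -/
def IsHarmonicExtension (n : ℕ) (u ub : Pt → ℝ) : Prop :=
  (∀ x ∈ (V n : Set Pt), ub x = u x) ∧
  ∀ m : ℕ, n < m → ∀ x ∈ (V m : Set Pt), x ∉ (V (m - 1) : Set Pt) → lap m ub x = 0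

/-!
Write `x ∈ V*` as `φ_c(φ_s(a_i))` with `|c| = n`. The harmonic equations at the three midpoints
of a cell of level `≥ n` give the `1/5–2/5` rule, so every new value of `ū_n` is a convex
combination of the values at the corners of its cell; inductively `ū_n(x)` lies between the least
and the greatest value of `u` at the corners of the level-`n` cell `φ_c(T)`. Those corners are
within `2^{-n}` of `x`, whence `|u x - ū_n x| ≤ M`.

The graph combinatorics (which vertices are new at a level, and their four neighbours) rests on
one fact, read off from barycentric coordinates: for `i ≠ j` the half-size copies `φ_i(T)` and
`φ_j(T)` of the triangle `T` meet only in the corner they share.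
-/

lemma sqrt_three_pos : 0 < √3 := Real.sqrt_pos.2 (by norm_num)

/-- Barycentric coordinates with respect to the corners `sierA 0`, `sierA 1`, `sierA 2`. -/
def bary (p : Pt) : Fin 3 → ℝ :=
  ![1 - p.1 - p.2 / √3, 2 * p.2 / √3, p.1 - p.2 / √3]

lemma bary_injective : Function.Injective bary := by
  intro p q h
  have h1 := congrFun h 1
  have h2 := congrFun h 2
  simp only [bary, Matrix.cons_val] at h1 h2
  have hy : p.2 = q.2 := by
    field_simp [sqrt_three_pos.ne'] at h1; linarith
  exact Prod.ext (by rw [hy] at h2; linarith) hy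

lemma sum_bary (p : Pt) : ∑ k, bary p k = 1 := by
  simp [Fin.sum_univ_three, bary]; ring

lemma bary_sierA (i : Fin 3) : bary (sierA i) = Pi.single i 1 := by
  have h3 : √3 ≠ 0 := sqrt_three_pos.ne'
  ext k
  fin_cases i <;> fin_cases k <;> simp [bary, sierA] <;> field_simp <;> norm_num

lemma bary_ctr (i : Fin 3) (p : Pt) (k : Fin 3) :
    bary (ctr i p) k = (bary p k + bary (sierA i) k) / 2 := by
  fin_cases k <;> simp [bary, ctr] <;> ring

lemma sierA_injective : Function.Injective sierA := fun i j h => by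
  have := congrFun (congrArg bary h) i
  rw [bary_sierA, bary_sierA] at this
  by_contra hij
  simp [hij] at this

def triangle : Set Pt := {p | ∀ k, 0 ≤ bary p k}

lemma sierA_mem_triangle (i : Fin 3) : sierA i ∈ triangle := fun k => by
  rw [bary_sierA, Pi.single_apply]; split_ifs <;> norm_num

lemma ctr_mem_triangle (i : Fin 3) {p : Pt} (hp : p ∈ triangle) : ctr i p ∈ triangle :=
  fun k => by rw [bary_ctr]; linarith [hp k, sierA_mem_triangle i k]

lemma bary_le_one {p : Pt} (hp : p ∈ triangle) (k : Fin 3) : bary p k ≤ 1 :=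
  sum_bary p ▸ Finset.single_le_sum (fun l _ => hp l) (Finset.mem_univ k)

lemma eq_sierA_of_one_le_bary {p : Pt} (hp : p ∈ triangle) {k : Fin 3} (h : 1 ≤ bary p k) :
    p = sierA k := by
  apply bary_injective
  ext l
  rw [bary_sierA, Pi.single_apply]
  split_ifs with hlk
  · subst hlk; linarith [bary_le_one hp l]
  · have := Finset.add_le_sum (fun l _ => hp l) (Finset.mem_univ k) (Finset.mem_univ l)
      (Ne.symm hlk)
    linarith [hp l, sum_bary p]

lemma eucl_sq_eq_sum_bary (p q : Pt) :
    eucl p q ^ 2 = (∑ k, (bary p k - bary q k) ^ 2) / 2 := by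
  have h3 : √3 ^ 2 = 3 := Real.sq_sqrt (by norm_num)
  rw [eucl, Real.sq_sqrt (by positivity)]
  simp only [Fin.sum_univ_three, bary, Matrix.cons_val]
  field_simp
  linear_combination 2 * (q.2 - p.2) ^ 2 * h3

lemma eucl_le_one {p q : Pt} (hp : p ∈ triangle) (hq : q ∈ triangle) : eucl p q ≤ 1 := by
  have hterm (k : Fin 3) : (bary p k - bary q k) ^ 2 ≤ bary p k + bary q k := by
    nlinarith [hp k, hq k, bary_le_one hp k, bary_le_one hq k]
  have hsum : ∑ k, (bary p k - bary q k) ^ 2 ≤ 2 :=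
    calc ∑ k, (bary p k - bary q k) ^ 2
        ≤ ∑ k, (bary p k + bary q k) := Finset.sum_le_sum fun k _ => hterm k
      _ = 2 := by rw [Finset.sum_add_distrib, sum_bary, sum_bary]; norm_num
  have hsq : eucl p q ^ 2 ≤ 1 := by rw [eucl_sq_eq_sum_bary]; linarith
  exact (pow_le_one_iff_of_nonneg (Real.sqrt_nonneg _) two_ne_zero).1 hsq


lemma ctr_eq_ctr_of_ne {i j : Fin 3} (hij : i ≠ j) {p q : Pt} (hp : p ∈ triangle)
    (hq : q ∈ triangle) (h : ctr i p = ctr j q) : p = sierA j ∧ q = sierA i := by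
  have hbary (k : Fin 3) := congrArg (bary · k) h
  simp only [bary_ctr, bary_sierA, Pi.single_apply] at hbary
  have hj := hbary j
  have hi := hbary i
  simp only [if_neg hij, if_neg (Ne.symm hij), if_pos] at hj hi
  exact ⟨eq_sierA_of_one_le_bary hp (by linarith [hq j]),
    eq_sierA_of_one_le_bary hq (by linarith [hp i])⟩

lemma ctr_injective (i : Fin 3) : Function.Injective (ctr i) := fun p q h => by
  have h1 := congrArg Prod.fst h
  have h2 := congrArg Prod.snd h
  simp only [ctr] at h1 h2
  exact Prod.ext (by linarith) (by linarith)

lemma ctr_sierA_self (i : Fin 3) : ctr i (sierA i) = sierA i :=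
  bary_injective <| funext fun k => by rw [bary_ctr]; ring

lemma ctr_sierA_comm (j k : Fin 3) : ctr j (sierA k) = ctr k (sierA j) := by
  simp only [ctr, add_comm]

lemma ctr_sierA_eq_ctr_sierA_iff {j k j' k' : Fin 3} :
    ctr j (sierA k) = ctr j' (sierA k') ↔ (j = j' ∧ k = k') ∨ (j = k' ∧ k = j') := by
  constructor
  · intro h
    by_cases hjj' : j = j'
    · subst hjj'
      exact Or.inl ⟨rfl, sierA_injective (ctr_injective j h)⟩
    · obtain ⟨hk, hk'⟩ :=
        ctr_eq_ctr_of_ne hjj' (sierA_mem_triangle k) (sierA_mem_triangle k') h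
      exact Or.inr ⟨(sierA_injective hk').symm, sierA_injective hk⟩
  · rintro (⟨rfl, rfl⟩ | ⟨rfl, rfl⟩)
    · rfl
    · exact ctr_sierA_comm _ _

lemma ctr_sierA_notMem_range {j k : Fin 3} (hjk : j ≠ k) :
    ctr j (sierA k) ∉ Set.range sierA := by
  rintro ⟨i, hi⟩
  rw [← ctr_sierA_self i, ctr_sierA_eq_ctr_sierA_iff] at hi
  rcases hi with ⟨rfl, rfl⟩ | ⟨rfl, rfl⟩ <;> exact hjk rfl

lemma eq_sierA_of_ctr_eq_sierA {c i : Fin 3} {q : Pt} (hq : q ∈ triangle)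
    (h : ctr c q = sierA i) : q = sierA i := by
  rcases eq_or_ne c i with rfl | hci
  · exact ctr_injective c (h.trans (ctr_sierA_self c).symm)
  · exact (ctr_eq_ctr_of_ne hci hq (sierA_mem_triangle i) (h.trans (ctr_sierA_self i).symm)).1

/-- `ctrWord w = φ_{w₀} ∘ φ_{w₁} ∘ ⋯`, the paper's `φ_w`. -/
def ctrWord (w : List (Fin 3)) (x : Pt) : Pt := w.foldr ctr x

@[simp] lemma ctrWord_nil (x : Pt) : ctrWord [] x = x := rfl

@[simp] lemma ctrWord_cons (i : Fin 3) (w : List (Fin 3)) (x : Pt) :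
    ctrWord (i :: w) x = ctr i (ctrWord w x) := rfl

lemma ctrWord_append (w w' : List (Fin 3)) (x : Pt) :
    ctrWord (w ++ w') x = ctrWord w (ctrWord w' x) :=
  List.foldr_append

lemma ctrWord_injective (w : List (Fin 3)) : Function.Injective (ctrWord w) := by
  induction w with
  | nil => exact Function.injective_id
  | cons i w ih => exact (ctr_injective i).comp ih

lemma ctrWord_mem_triangle (w : List (Fin 3)) {p : Pt} (hp : p ∈ triangle) :
    ctrWord w p ∈ triangle := by
  induction w with
  | nil => exact hp
  | cons i w ih => exact ctr_mem_triangle i ih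

lemma eq_sierA_of_ctrWord_eq_sierA {w : List (Fin 3)} {p : Pt} {i : Fin 3}
    (hp : p ∈ triangle) (h : ctrWord w p = sierA i) : p = sierA i := by
  induction w with
  | nil => exact h
  | cons c w ih => exact ih (eq_sierA_of_ctr_eq_sierA (ctrWord_mem_triangle w hp) h)

lemma eq_of_ctrWord_eq_ctrWord {u u' : List (Fin 3)} (hl : u.length = u'.length) {p q : Pt}
    (hp : p ∈ triangle) (hq : q ∈ triangle) (hpc : p ∉ Set.range sierA)
    (h : ctrWord u p = ctrWord u' q) : u = u' ∧ p = q := by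
  induction u generalizing u' with
  | nil =>
    obtain rfl := List.length_eq_zero_iff.1 hl.symm
    exact ⟨rfl, h⟩
  | cons c t ih =>
    obtain ⟨c', t', rfl⟩ := List.exists_of_length_succ u' hl.symm
    by_cases hcc' : c = c'
    · subst hcc'
      obtain ⟨rfl, hpq⟩ := ih (by simpa using hl) (ctr_injective c h)
      exact ⟨rfl, hpq⟩
    · have hc' := (ctr_eq_ctr_of_ne hcc' (ctrWord_mem_triangle t hp)
        (ctrWord_mem_triangle t' hq) h).1
      exact absurd ⟨c', (eq_sierA_of_ctrWord_eq_sierA hp hc').symm⟩ hpc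

lemma mem_V_zero {x : Pt} : x ∈ V 0 ↔ ∃ i, sierA i = x := by
  simp [V, Fin.exists_fin_succ, eq_comm]

lemma mem_V_succ {m : ℕ} {x : Pt} : x ∈ V (m + 1) ↔ ∃ i, ∃ y ∈ V m, ctr i y = x := by
  simp [V, Fin.exists_fin_succ]

lemma mem_Ed_zero {p : Pt × Pt} : p ∈ Ed 0 ↔ ∃ i j, i ≠ j ∧ (sierA i, sierA j) = p := by
  simp only [Ed, Finset.mem_filter, Finset.mem_product, mem_V_zero]
  constructor
  · rintro ⟨⟨⟨i, hi⟩, ⟨j, hj⟩⟩, hne⟩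
    exact ⟨i, j, fun hij => hne (by rw [← hi, ← hj, hij]), Prod.ext hi hj⟩
  · rintro ⟨i, j, hij, rfl⟩
    exact ⟨⟨⟨i, rfl⟩, ⟨j, rfl⟩⟩, fun h => hij (sierA_injective h)⟩

lemma mem_Ed_succ {m : ℕ} {p : Pt × Pt} :
    p ∈ Ed (m + 1) ↔ ∃ i, ∃ q ∈ Ed m, (ctr i q.1, ctr i q.2) = p := by
  simp [Ed]

lemma mem_V_iff {m : ℕ} {x : Pt} :
    x ∈ V m ↔ ∃ w : List (Fin 3), w.length = m ∧ ∃ i, ctrWord w (sierA i) = x := by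
  induction m generalizing x with
  | zero => simp [mem_V_zero]
  | succ m ih =>
    rw [mem_V_succ]
    constructor
    · rintro ⟨c, y, hy, rfl⟩
      obtain ⟨w, hw, i, rfl⟩ := ih.1 hy
      exact ⟨c :: w, by simp [hw], i, rfl⟩
    · rintro ⟨w, hw, i, rfl⟩
      obtain ⟨c, t, rfl⟩ := List.exists_of_length_succ w hw
      exact ⟨c, _, ih.2 ⟨t, by simpa using hw, i, rfl⟩, rfl⟩

lemma mem_Ed_iff {m : ℕ} {p : Pt × Pt} :
    p ∈ Ed m ↔ ∃ w : List (Fin 3), w.length = m ∧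
      ∃ i j, i ≠ j ∧ (ctrWord w (sierA i), ctrWord w (sierA j)) = p := by
  induction m generalizing p with
  | zero => simp [mem_Ed_zero]
  | succ m ih =>
    rw [mem_Ed_succ]
    constructor
    · rintro ⟨c, q, hq, rfl⟩
      obtain ⟨w, hw, i, j, hij, rfl⟩ := ih.1 hq
      exact ⟨c :: w, by simp [hw], i, j, hij, rfl⟩
    · rintro ⟨w, hw, i, j, hij, rfl⟩
      obtain ⟨c, t, rfl⟩ := List.exists_of_length_succ w hw
      exact ⟨c, _, ih.2 ⟨t, by simpa using hw, i, j, hij, rfl⟩, rfl⟩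

lemma ctrWord_sierA_mem_V (w : List (Fin 3)) (i : Fin 3) : ctrWord w (sierA i) ∈ V w.length :=
  mem_V_iff.2 ⟨w, rfl, i, rfl⟩

lemma V_mono : Monotone V := by
  refine monotone_nat_of_le_succ fun m x hx => ?_
  obtain ⟨w, rfl, i, rfl⟩ := mem_V_iff.1 hx
  simpa [ctrWord_append, ctr_sierA_self] using ctrWord_sierA_mem_V (w ++ [i]) i

lemma eucl_ctr (i : Fin 3) (p q : Pt) : eucl (ctr i p) (ctr i q) = eucl p q / 2 := by
  have h : ((q.1 + (sierA i).1) / 2 - (p.1 + (sierA i).1) / 2) ^ 2 +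
      ((q.2 + (sierA i).2) / 2 - (p.2 + (sierA i).2) / 2) ^ 2 =
      ((q.1 - p.1) ^ 2 + (q.2 - p.2) ^ 2) * (1 / 2) ^ 2 := by ring
  rw [eucl, eucl, ctr, ctr, h, Real.sqrt_mul (by positivity), Real.sqrt_sq (by norm_num)]
  ring

lemma eucl_ctrWord (w : List (Fin 3)) (p q : Pt) :
    eucl (ctrWord w p) (ctrWord w q) = eucl p q / 2 ^ w.length := by
  induction w with
  | nil => simp
  | cons c t ih =>
    rw [ctrWord_cons, ctrWord_cons, eucl_ctr, ih, List.length_cons, pow_succ]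
    ring

lemma ctrWord_ctr_mem_V (u : List (Fin 3)) (j k : Fin 3) :
    ctrWord u (ctr j (sierA k)) ∈ V (u.length + 1) := by
  simpa [ctrWord_append] using ctrWord_sierA_mem_V (u ++ [j]) k

lemma ctrWord_ctr_notMem_V {u : List (Fin 3)} {j k : Fin 3} (hjk : j ≠ k) :
    ctrWord u (ctr j (sierA k)) ∉ V u.length := by
  intro hx
  obtain ⟨w, hw, i, hi⟩ := mem_V_iff.1 hx
  have := eq_of_ctrWord_eq_ctrWord hw.symm (ctr_mem_triangle j (sierA_mem_triangle k))
    (sierA_mem_triangle i) (ctr_sierA_notMem_range hjk) hi.symm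
  exact ctr_sierA_notMem_range hjk ⟨i, this.2.symm⟩

lemma fin_three_eq_or_eq_or_eq : ∀ {j k o : Fin 3}, j ≠ k → j ≠ o → k ≠ o →
    ∀ i, i = j ∨ i = k ∨ i = o := by
  decide

lemma filter_Ed_fst_eq_ctrWord_ctr {u : List (Fin 3)} {j k o : Fin 3}
    (hjk : j ≠ k) (hjo : j ≠ o) (hko : k ≠ o) :
    (Ed (u.length + 1)).filter (fun p => p.1 = ctrWord u (ctr j (sierA k))) =
      {(ctrWord u (ctr j (sierA k)), ctrWord u (ctr j (sierA j))),
        (ctrWord u (ctr j (sierA k)), ctrWord u (ctr j (sierA o))),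
        (ctrWord u (ctr j (sierA k)), ctrWord u (ctr k (sierA k))),
        (ctrWord u (ctr j (sierA k)), ctrWord u (ctr k (sierA o)))} := by
  have edge_mem (c i i' : Fin 3) (h : i ≠ i') :
      (ctrWord u (ctr c (sierA i)), ctrWord u (ctr c (sierA i'))) ∈ Ed (u.length + 1) :=
    mem_Ed_iff.2 ⟨u ++ [c], by simp, i, i', h, by simp [ctrWord_append]⟩
  ext p
  simp only [Finset.mem_filter, Finset.mem_insert, Finset.mem_singleton]
  constructor
  · rintro ⟨hp, hx⟩
    obtain ⟨w, hw, i, i', hii', rfl⟩ := mem_Ed_iff.1 hp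
    obtain ⟨t, c, rfl⟩ := (List.eq_nil_or_concat' w).resolve_left (by rintro rfl; simp at hw)
    simp only [ctrWord_append, ctrWord_cons, ctrWord_nil] at hx ⊢
    -- the point has exactly the two addresses `(u ++ [j], k)` and `(u ++ [k], j)` at this level
    obtain ⟨rfl, hmid⟩ := eq_of_ctrWord_eq_ctrWord (by simpa using hw.symm)
      (ctr_mem_triangle j (sierA_mem_triangle k)) (ctr_mem_triangle c (sierA_mem_triangle i))
      (ctr_sierA_notMem_range hjk) hx.symm
    rcases ctr_sierA_eq_ctr_sierA_iff.1 hmid with ⟨rfl, rfl⟩ | ⟨rfl, rfl⟩ <;>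
      rcases fin_three_eq_or_eq_or_eq hjk hjo hko i' with rfl | rfl | rfl <;>
      simp_all [ctr_sierA_comm]
  · rintro (rfl | rfl | rfl | rfl)
    · exact ⟨edge_mem j k j (Ne.symm hjk), rfl⟩
    · exact ⟨edge_mem j k o hko, rfl⟩
    · exact ⟨by simpa [ctr_sierA_comm k j] using edge_mem k j k hjk, rfl⟩
    · exact ⟨by simpa [ctr_sierA_comm k j] using edge_mem k j o hjo, rfl⟩

lemma lap_ctrWord_ctr (f : Pt → ℝ) {u : List (Fin 3)} {j k o : Fin 3}
    (hjk : j ≠ k) (hjo : j ≠ o) (hko : k ≠ o) :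
    lap (u.length + 1) f (ctrWord u (ctr j (sierA k))) = 5 ^ (u.length + 1) *
      (f (ctrWord u (sierA j)) + f (ctrWord u (ctr j (sierA o))) + f (ctrWord u (sierA k)) +
        f (ctrWord u (ctr k (sierA o))) - 4 * f (ctrWord u (ctr j (sierA k)))) := by
  rw [lap, filter_Ed_fst_eq_ctrWord_ctr hjk hjo hko, Finset.sum_insert, Finset.sum_insert,
    Finset.sum_insert, Finset.sum_singleton, ctr_sierA_self, ctr_sierA_self]
  · ring
  all_goals
    simp only [Finset.mem_insert, Finset.mem_singleton, Prod.mk.injEq, true_and,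
      (ctrWord_injective u).eq_iff, ctr_sierA_eq_ctr_sierA_iff]
    grind

lemma lap_neg (m : ℕ) (f : Pt → ℝ) (x : Pt) : lap m (-f) x = -lap m f x := by
  simp only [lap, Pi.neg_apply, neg_sub_neg]
  rw [← mul_neg, ← Finset.sum_neg_distrib]
  simp only [neg_sub]

def HarmonicAbove (n : ℕ) (f : Pt → ℝ) : Prop :=
  ∀ m : ℕ, n < m → ∀ x ∈ (V m : Set Pt), x ∉ (V (m - 1) : Set Pt) → lap m f x = 0

namespace HarmonicAbove

variable {n : ℕ} {f : Pt → ℝ}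

lemma neg (hf : HarmonicAbove n f) : HarmonicAbove n (-f) := fun m hm x hx hx' => by
  rw [lap_neg, hf m hm x hx hx', neg_zero]

lemma apply_ctrWord_ctr (hf : HarmonicAbove n f) {u : List (Fin 3)} (hn : n ≤ u.length)
    {j k o : Fin 3} (hjk : j ≠ k) (hjo : j ≠ o) (hko : k ≠ o) :
    f (ctrWord u (ctr j (sierA k))) =
      (2 * f (ctrWord u (sierA j)) + 2 * f (ctrWord u (sierA k)) +
        f (ctrWord u (sierA o))) / 5 := by
  have mean {j k o : Fin 3} (hjk : j ≠ k) (hjo : j ≠ o) (hko : k ≠ o) :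
      f (ctrWord u (sierA j)) + f (ctrWord u (ctr j (sierA o))) + f (ctrWord u (sierA k)) +
        f (ctrWord u (ctr k (sierA o))) = 4 * f (ctrWord u (ctr j (sierA k))) := by
    have h := hf _ (by omega) _ (ctrWord_ctr_mem_V u j k)
      (by simpa using ctrWord_ctr_notMem_V hjk)
    rw [lap_ctrWord_ctr f hjk hjo hko] at h
    linarith [(mul_eq_zero.1 h).resolve_left (by positivity)]
  have e₁ := mean hjk hjo hko
  have e₂ := mean hjo hjk hko.symm
  have e₃ := mean hko hjk.symm hjo.symm
  rw [ctr_sierA_comm o k] at e₂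
  rw [ctr_sierA_comm k j, ctr_sierA_comm o j] at e₃
  linarith

lemma exists_ge_ctrWord_ctr (hf : HarmonicAbove n f) {u : List (Fin 3)} (hn : n ≤ u.length)
    (c i : Fin 3) : ∃ l, f (ctrWord u (ctr c (sierA i))) ≤ f (ctrWord u (sierA l)) := by
  rcases eq_or_ne c i with rfl | hci
  · exact ⟨c, by rw [ctr_sierA_self]⟩
  obtain ⟨o, hco, hio⟩ : ∃ o, c ≠ o ∧ i ≠ o := by revert c i; decide
  have h := hf.apply_ctrWord_ctr hn hci hco hio
  by_contra! hlt
  linarith [hlt c, hlt i, hlt o]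

lemma exists_ge_ctrWord (hf : HarmonicAbove n f) {u : List (Fin 3)} (hn : n ≤ u.length)
    (s : List (Fin 3)) (i : Fin 3) :
    ∃ l, f (ctrWord u (ctrWord s (sierA i))) ≤ f (ctrWord u (sierA l)) := by
  induction s generalizing u with
  | nil => exact ⟨i, le_rfl⟩
  | cons c s ih =>
    obtain ⟨j, hj⟩ := ih (u := u ++ [c]) (by simp; omega)
    obtain ⟨l, hl⟩ := hf.exists_ge_ctrWord_ctr hn c j
    exact ⟨l, le_trans (by simpa [ctrWord_append] using hj) hl⟩

lemma exists_le_ctrWord (hf : HarmonicAbove n f) {u : List (Fin 3)} (hn : n ≤ u.length)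
    (s : List (Fin 3)) (i : Fin 3) :
    ∃ l, f (ctrWord u (sierA l)) ≤ f (ctrWord u (ctrWord s (sierA i))) := by
  obtain ⟨l, hl⟩ := hf.neg.exists_ge_ctrWord hn s i
  exact ⟨l, by simpa using hl⟩

end HarmonicAbove

lemma exists_cell_of_mem_Vstar {x : Pt} (hx : x ∈ Vstar) (n : ℕ) :
    ∃ c : List (Fin 3), c.length = n ∧ ∃ s i, ctrWord c (ctrWord s (sierA i)) = x := by
  obtain ⟨m, hm⟩ := Set.mem_iUnion.1 hx
  obtain ⟨w, hw, i, rfl⟩ := mem_V_iff.1 (V_mono (le_max_left m n) hm)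
  exact ⟨w.take n, by simp [hw], w.drop n, i, by rw [← ctrWord_append, List.take_append_drop]⟩

lemma eucl_ctrWord_sierA_le (c s : List (Fin 3)) (i j : Fin 3) :
    eucl (ctrWord c (ctrWord s (sierA i))) (ctrWord c (sierA j)) ≤ 1 / 2 ^ c.length := by
  rw [eucl_ctrWord]
  gcongr
  exact eucl_le_one (ctrWord_mem_triangle s (sierA_mem_triangle i)) (sierA_mem_triangle j)

/-- `sup_{x∈V*} |u x − ū_n x| ≤ 2 sup{|u x − u y| : x,y ∈ V*, |x−y| ≤ 2^{−n}}`,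
expressed via upper bounds `M` of the right-hand modulus of continuity. -/
theorem harmonic_extension_uniform_approx (n : ℕ) (u ub : Pt → ℝ)
    (hub : IsHarmonicExtension n u ub) (M : ℝ)
    (hM : ∀ x ∈ Vstar, ∀ y ∈ Vstar, eucl x y ≤ 1 / 2 ^ n → |u x - u y| ≤ M) :
    ∀ x ∈ Vstar, |u x - ub x| ≤ 2 * M := by
  intro x hx
  obtain ⟨hext, hharm⟩ := hub
  have hM₀ : 0 ≤ M := (abs_nonneg _).trans (hM x hx x hx (by simp [eucl]))
  obtain ⟨c, rfl, s, i, rfl⟩ := exists_cell_of_mem_Vstar hx n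
  have corner_close (j : Fin 3) := abs_le.1 <| hM _ hx _
    (Set.mem_iUnion.2 ⟨_, ctrWord_sierA_mem_V c j⟩) (eucl_ctrWord_sierA_le c s i j)
  obtain ⟨j₁, h₁⟩ := HarmonicAbove.exists_ge_ctrWord hharm le_rfl s i
  obtain ⟨j₂, h₂⟩ := HarmonicAbove.exists_le_ctrWord hharm le_rfl s i
  rw [hext _ (ctrWord_sierA_mem_V c j₁)] at h₁
  rw [hext _ (ctrWord_sierA_mem_V c j₂)] at h₂
  rw [abs_le]
  constructor <;> linarith [corner_close j₁, corner_close j₂]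

end
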